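/- For a modulated soliton u(t,x) = √2·A(t)·exp(−i∫₀ᵗA²(s)ds)·sech(A(t)x) with A : [0,T] → (0,∞) continuously differentiable, the control h_A(t,x) = i(A'/A)(t)·u(t,x) − i√2·A'(t)·exp(−i∫₀ᵗA²(s)ds)·A(t)·x·sinh(A(t)x)/cosh²(A(t)x) (i.e., h_A = i·∂ₜu − Δu − |u|²u) has squared space-time L² norm ‖h_A‖²_{L²(0,T;L²)} = (1/9)(12 + π²)·∫₀ᵀ (A'(t))²/A(t) dt. -/

import Mathlib

/-!
With `θ(t) = ∫₀ᵗ A²`, the control is `h_A(t,x) = i e^{-iθ} √2 A'(t) φ(A(t)x)`, where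
`φ(y) = (cosh y - y sinh y) / cosh² y = (y sech y)'` is the derivative of the soliton profile in
its scaling parameter; hence `‖h_A(t)‖²_{L²} = 2 A'² / A · ∫ φ²`. Integrating
`φ² = sech² y (1 - y tanh y)²` by parts over `(0, ∞)` leaves `1/3 + (2/3) ∫₀^∞ y (1 - tanh y) dy`,
and expanding `1 - tanh y = 2 ∑ (-1)ⁿ e^{-2(n+1)y}` turns the last integral into
`η(2) / 2 = π² / 24`. By evenness `∫_ℝ φ² = (12 + π²) / 18`.
-/

open MeasureTheory Real Filter Set Topology

namespace Real

theorem one_sub_tanh_sq (x : ℝ) : 1 - tanh x ^ 2 = 1 / cosh x ^ 2 := by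
  have := cosh_pos x
  rw [tanh_eq_sinh_div_cosh]
  field_simp
  linear_combination cosh_sq_sub_sinh_sq x

theorem hasDerivAt_tanh (x : ℝ) : HasDerivAt tanh (1 - tanh x ^ 2) x := by
  have h := (hasDerivAt_sinh x).div (hasDerivAt_cosh x) (cosh_pos x).ne'
  rw [one_sub_tanh_sq, show tanh = sinh / cosh from funext tanh_eq_sinh_div_cosh]
  refine h.congr_deriv ?_
  rw [← cosh_sq_sub_sinh_sq x]
  ring

theorem continuous_tanh : Continuous tanh :=
  continuous_iff_continuousAt.2 fun x => (hasDerivAt_tanh x).continuousAt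

theorem one_sub_tanh_eq (x : ℝ) : 1 - tanh x = 2 * exp (-(2 * x)) / (1 + exp (-(2 * x))) := by
  have h : exp (-(2 * x)) = exp (-x) / exp x := by rw [← exp_sub]; ring_nf
  have := exp_pos x
  have := exp_pos (-x)
  rw [tanh_eq, h]
  field_simp
  ring

theorem one_sub_tanh_le (x : ℝ) : 1 - tanh x ≤ 2 * exp (-(2 * x)) := by
  rw [one_sub_tanh_eq]
  exact div_le_self (by positivity) (le_add_of_nonneg_right (exp_pos _).le)

end Real

theorem integrableOn_pow_mul_exp_neg_mul (n : ℕ) {c : ℝ} (hc : 0 < c) :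
    IntegrableOn (fun y : ℝ => y ^ n * exp (-(c * y))) (Ioi 0) := by
  refine (integrableOn_rpow_mul_exp_neg_mul_rpow (s := n) (by linarith [n.cast_nonneg (α := ℝ)])
    one_pos hc).congr_fun (fun y _ => ?_) measurableSet_Ioi
  simp [rpow_natCast, neg_mul]

theorem integral_pow_mul_exp_neg_mul_Ioi (n : ℕ) {c : ℝ} (hc : 0 < c) :
    ∫ y in Ioi (0 : ℝ), y ^ n * exp (-(c * y)) = n.factorial / c ^ (n + 1) := by
  have h := integral_rpow_mul_exp_neg_mul_Ioi (a := n + 1) (by positivity) hc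
  simp only [Gamma_nat_eq_factorial, add_sub_cancel_right, rpow_natCast] at h
  rw [h, ← Nat.cast_succ, rpow_natCast, one_div, inv_pow, inv_mul_eq_div]

theorem tendsto_pow_mul_exp_neg_mul_atTop (n : ℕ) {c : ℝ} (hc : 0 < c) :
    Tendsto (fun y : ℝ => y ^ n * exp (-(c * y))) atTop (𝓝 0) := by
  simpa [rpow_natCast, neg_mul] using tendsto_rpow_mul_exp_neg_mul_atTop_nhds_zero n c hc

theorem hasSum_neg_one_pow_div_succ_sq :
    HasSum (fun n : ℕ => (-1) ^ n / ((n : ℝ) + 1) ^ 2) (π ^ 2 / 12) := by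
  set ζ : ℕ → ℝ := fun n => 1 / (n : ℝ) ^ 2
  have hζ : HasSum ζ (π ^ 2 / 6) := hasSum_zeta_two
  have hEven : HasSum (fun k => ζ (2 * k)) (π ^ 2 / 24) := by
    have := hζ.mul_left (1 / 4)
    rw [show 1 / 4 * (π ^ 2 / 6) = π ^ 2 / 24 by ring] at this
    refine this.congr_fun fun k => ?_
    simp only [ζ]
    push_cast
    ring
  have hOdd : HasSum (fun k => ζ (2 * k + 1)) (π ^ 2 / 8) := by
    have hs : Summable fun k => ζ (2 * k + 1) :=
      hζ.summable.comp_injective fun a b h => by simpa using h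
    have := (hEven.even_add_odd hs.hasSum).unique hζ
    rw [show π ^ 2 / 8 = ∑' k, ζ (2 * k + 1) by linarith]
    exact hs.hasSum
  have hEvenSucc : HasSum (fun k => ζ (2 * k + 2)) (π ^ 2 / 24) := by
    rw [← hasSum_nat_add_iff' 1] at hEven
    simpa [ζ, mul_add] using hEven
  have := HasSum.even_add_odd (f := fun n : ℕ => (-1) ^ n / ((n : ℝ) + 1) ^ 2)
    (hOdd.congr_fun fun k => ?_) (hEvenSucc.neg.congr_fun fun k => ?_)
  · convert this using 1
    ring
  · simp only [ζ, pow_mul, neg_one_sq, one_pow]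
    push_cast
    ring
  · simp only [ζ, pow_succ, pow_mul]
    push_cast
    ring

theorem tendsto_pow_mul_one_sub_tanh_atTop (n : ℕ) :
    Tendsto (fun y : ℝ => y ^ n * (1 - tanh y)) atTop (𝓝 0) := by
  have hlim := (tendsto_pow_mul_exp_neg_mul_atTop n two_pos).const_mul 2
  rw [mul_zero] at hlim
  refine tendsto_of_tendsto_of_tendsto_of_le_of_le' tendsto_const_nhds hlim ?_ ?_
  · filter_upwards [eventually_ge_atTop 0] with y hy
    exact mul_nonneg (pow_nonneg hy n) (sub_nonneg.2 (tanh_lt_one y).le)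
  · filter_upwards [eventually_ge_atTop 0] with y hy
    linarith [mul_le_mul_of_nonneg_left (one_sub_tanh_le y) (pow_nonneg hy n)]

theorem integrableOn_mul_one_sub_tanh : IntegrableOn (fun y => y * (1 - tanh y)) (Ioi 0) := by
  refine ((integrableOn_pow_mul_exp_neg_mul 1 two_pos).const_mul 2).mono'
    (continuous_id.mul (continuous_const.sub continuous_tanh)).aestronglyMeasurable.restrict
    (ae_restrict_of_forall_mem measurableSet_Ioi fun y (hy : 0 < y) => ?_)
  rw [Real.norm_eq_abs, abs_of_nonneg (mul_nonneg hy.le (sub_nonneg.2 (tanh_lt_one y).le)), pow_one,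
    mul_left_comm]
  exact mul_le_mul_of_nonneg_left (one_sub_tanh_le y) hy.le

theorem hasSum_mul_one_sub_tanh {y : ℝ} (hy : 0 < y) :
    HasSum (fun n : ℕ => 2 * (-1) ^ n * (y * exp (-(2 * (n + 1) * y)))) (y * (1 - tanh y)) := by
  rw [one_sub_tanh_eq]
  set q := exp (-(2 * y))
  have hq : |-q| < 1 := by
    rw [abs_neg, abs_of_pos (exp_pos _)]
    exact exp_lt_one_iff.2 (by linarith)
  have hterm (n : ℕ) : exp (-(2 * (n + 1) * y)) = q * q ^ n := by
    rw [← exp_nat_mul, ← exp_add]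
    ring_nf
  rw [show y * (2 * q / (1 + q)) = 2 * y * q * (1 - -q)⁻¹ by ring]
  refine ((hasSum_geometric_of_abs_lt_one hq).mul_left (2 * y * q)).congr_fun fun n => ?_
  rw [hterm, neg_pow]
  ring

theorem integral_mul_one_sub_tanh_Ioi : ∫ y in Ioi (0 : ℝ), y * (1 - tanh y) = π ^ 2 / 24 := by
  set F : ℕ → ℝ → ℝ := fun n y => 2 * (-1) ^ n * (y * exp (-(2 * (n + 1) * y)))
  have hc (n : ℕ) : (0 : ℝ) < 2 * (n + 1) := by positivity
  have hmoment (n : ℕ) :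
      ∫ y in Ioi (0 : ℝ), y * exp (-(2 * (n + 1) * y)) = 1 / (2 * (n + 1)) ^ 2 := by
    simpa using integral_pow_mul_exp_neg_mul_Ioi 1 (hc n)
  have hint (n : ℕ) : Integrable (F n) (volume.restrict (Ioi 0)) := by
    simpa using (integrableOn_pow_mul_exp_neg_mul 1 (hc n)).const_mul (2 * (-1) ^ n)
  have hnorm (n : ℕ) : ∫ y in Ioi (0 : ℝ), ‖F n y‖ = 1 / 2 * (1 / ((n : ℝ) + 1) ^ 2) := by
    rw [setIntegral_congr_fun measurableSet_Ioi (g := fun y => 2 * (y * exp (-(2 * (n + 1) * y))))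
      fun y (hy : 0 < y) => by simp [F, abs_of_pos hy]]
    rw [integral_const_mul, hmoment]
    field_simp
  have hsum := hasSum_integral_of_summable_integral_norm hint ?_
  · rw [← setIntegral_congr_fun measurableSet_Ioi fun y hy => (hasSum_mul_one_sub_tanh hy).tsum_eq]
    have h := hasSum_neg_one_pow_div_succ_sq.mul_left (1 / 2)
    rw [show 1 / 2 * (π ^ 2 / 12) = π ^ 2 / 24 by ring] at h
    refine hsum.unique (h.congr_fun fun n => ?_)
    simp only [F, integral_const_mul, hmoment]
    field_simp
  · simp_rw [hnorm]
    refine Summable.mul_left _ ?_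
    exact_mod_cast (summable_nat_add_iff 1).2 (Real.summable_one_div_nat_pow.2 one_lt_two)

noncomputable def solitonScalingMode (y : ℝ) : ℝ := (cosh y - y * sinh y) / cosh y ^ 2

theorem solitonScalingMode_sq (y : ℝ) :
    solitonScalingMode y ^ 2 = (1 - tanh y ^ 2) * (1 - y * tanh y) ^ 2 := by
  have := cosh_pos y
  rw [solitonScalingMode, one_sub_tanh_sq, tanh_eq_sinh_div_cosh]
  field_simp

theorem solitonScalingMode_neg (y : ℝ) : solitonScalingMode (-y) = solitonScalingMode y := by
  simp [solitonScalingMode]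

theorem integrableOn_solitonScalingMode_sq :
    IntegrableOn (fun y => solitonScalingMode y ^ 2) (Ioi 0) := by
  have hbound := ((integrableOn_pow_mul_exp_neg_mul 0 two_pos).add
    (integrableOn_pow_mul_exp_neg_mul 2 two_pos)).const_mul 8
  have hcont : Continuous solitonScalingMode := by
    unfold solitonScalingMode
    fun_prop (disch := exact fun y => (pow_pos (cosh_pos y) 2).ne')
  refine hbound.mono' (hcont.pow 2).aestronglyMeasurable.restrict
    (ae_restrict_of_forall_mem measurableSet_Ioi fun y _ => ?_)
  have hsech : 1 - tanh y ^ 2 ≤ 4 * exp (-(2 * y)) := by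
    nlinarith [one_sub_tanh_le y, tanh_lt_one y, neg_one_lt_tanh y]
  have hpoly : (1 - y * tanh y) ^ 2 ≤ 2 * (1 + y ^ 2) := by
    nlinarith [tanh_sq_lt_one y, sq_nonneg (1 + y * tanh y), sq_nonneg y]
  rw [norm_pow, Real.norm_eq_abs, sq_abs, solitonScalingMode_sq]
  calc (1 - tanh y ^ 2) * (1 - y * tanh y) ^ 2 ≤ 4 * exp (-(2 * y)) * (2 * (1 + y ^ 2)) :=
        mul_le_mul hsech hpoly (sq_nonneg _) (by positivity)
    _ = _ := by simp only [Pi.add_apply]; ring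

-- Integration by parts; the remainder `y (1 - tanh y)` has no elementary primitive.
noncomputable def scalingModePrimitive (y : ℝ) : ℝ :=
  2 / 3 * y * (1 - tanh y ^ 2) + y ^ 2 / 3 * (tanh y ^ 3 - 1) + tanh y / 3

theorem hasDerivAt_scalingModePrimitive (y : ℝ) :
    HasDerivAt scalingModePrimitive
      (solitonScalingMode y ^ 2 - 2 / 3 * (y * (1 - tanh y))) y := by
  have ht := hasDerivAt_tanh y
  have h := ((((hasDerivAt_id y).const_mul (2 / 3)).mul ((ht.pow 2).const_sub 1)).add
    (((hasDerivAt_id y).pow 2 |>.div_const 3).mul ((ht.pow 3).sub_const 1))).add (ht.div_const 3)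
  refine h.congr_deriv ?_
  rw [solitonScalingMode_sq]
  simp only [id, Pi.pow_apply]
  ring

theorem tendsto_scalingModePrimitive_atTop :
    Tendsto scalingModePrimitive atTop (𝓝 (1 / 3)) := by
  have hg (n : ℕ) := tendsto_pow_mul_one_sub_tanh_atTop n
  have htanh : Tendsto tanh atTop (𝓝 1) := by
    simpa using (hg 0).const_sub 1
  have h := (((hg 1).mul (htanh.const_add 1)).const_mul (2 / 3)).sub
    (((hg 2).mul ((htanh.add (htanh.pow 2)).const_add 1)).const_mul (1 / 3)) |>.add
    (htanh.div_const 3)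
  norm_num at h
  refine h.congr fun y => ?_
  simp only [scalingModePrimitive]
  ring

theorem integral_solitonScalingMode_sq_Ioi :
    ∫ y in Ioi (0 : ℝ), solitonScalingMode y ^ 2 = (12 + π ^ 2) / 36 := by
  have htail := integrableOn_mul_one_sub_tanh.const_mul (2 / 3)
  have hprim :
      ∫ y in Ioi (0 : ℝ), (solitonScalingMode y ^ 2 - 2 / 3 * (y * (1 - tanh y))) = 1 / 3 := by
    rw [integral_Ioi_of_hasDerivAt_of_tendsto' (fun y _ => hasDerivAt_scalingModePrimitive y)
      (integrableOn_solitonScalingMode_sq.sub htail) tendsto_scalingModePrimitive_atTop]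
    simp [scalingModePrimitive]
  rw [integral_sub integrableOn_solitonScalingMode_sq htail, integral_const_mul,
    integral_mul_one_sub_tanh_Ioi] at hprim
  linarith

theorem integral_solitonScalingMode_sq :
    ∫ y, solitonScalingMode y ^ 2 = (12 + π ^ 2) / 18 := by
  have habs (y : ℝ) : solitonScalingMode |y| = solitonScalingMode y := by
    rcases abs_choice y with h | h <;> rw [h]
    exact solitonScalingMode_neg y
  calc ∫ y, solitonScalingMode y ^ 2 = ∫ y, solitonScalingMode |y| ^ 2 := by simp_rw [habs]
    _ = 2 * ∫ y in Ioi (0 : ℝ), solitonScalingMode y ^ 2 :=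
      integral_comp_abs (f := fun y => solitonScalingMode y ^ 2)
    _ = (12 + π ^ 2) / 18 := by rw [integral_solitonScalingMode_sq_Ioi]; ring

theorem integral_solitonScalingMode_sq_comp_mul {a : ℝ} (ha : 0 < a) :
    ∫ x, solitonScalingMode (a * x) ^ 2 = (12 + π ^ 2) / (18 * a) := by
  rw [Measure.integral_comp_mul_left (fun y => solitonScalingMode y ^ 2),
    integral_solitonScalingMode_sq, abs_inv, abs_of_pos ha, smul_eq_mul]
  field_simp

theorem control_eq_scalingMode {a : ℝ} (ha : a ≠ 0) (a' x : ℝ) (e : ℂ) :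
    Complex.I * ((a' / a : ℝ) : ℂ) * (((√2 * a / cosh (a * x) : ℝ) : ℂ) * e) -
        Complex.I * ((√2 * a' : ℝ) : ℂ) * e * ((a * x * sinh (a * x) / cosh (a * x) ^ 2 : ℝ) : ℂ) =
      Complex.I * e * ((√2 * a' * solitonScalingMode (a * x) : ℝ) : ℂ) := by
  have hreal : a' / a * (√2 * a / cosh (a * x)) -
      √2 * a' * (a * x * sinh (a * x) / cosh (a * x) ^ 2) = √2 * a' * solitonScalingMode (a * x) := by
    have := cosh_pos (a * x)
    rw [solitonScalingMode]
    field_simp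
  rw [← hreal]
  push_cast
  ring

theorem norm_I_mul_exp_mul_ofReal_sq (θ r : ℝ) :
    ‖Complex.I * Complex.exp (-Complex.I * θ) * r‖ ^ 2 = r ^ 2 := by
  simp [Complex.norm_exp]

theorem modulated_soliton_control_cost_general
    (T : ℝ)
    (A : ℝ → ℝ) (hApos : ∀ t, 0 < A t)
    (u hA' : ℝ → ℝ → ℂ)
    (hu : ∀ t x : ℝ, u t x =
      ((Real.sqrt 2 * A t / Real.cosh (A t * x) : ℝ) : ℂ) *
        Complex.exp (-Complex.I * ((∫ s in (0 : ℝ)..t, (A s) ^ 2 : ℝ) : ℂ)))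
    (hcontrol : ∀ t x : ℝ, hA' t x =
      Complex.I * ((deriv A t / A t : ℝ) : ℂ) * u t x -
        Complex.I * ((Real.sqrt 2 * deriv A t : ℝ) : ℂ) *
          Complex.exp (-Complex.I * ((∫ s in (0 : ℝ)..t, (A s) ^ 2 : ℝ) : ℂ)) *
          ((A t * x * Real.sinh (A t * x) / (Real.cosh (A t * x)) ^ 2 : ℝ) : ℂ)) :
    (∫ t in (0 : ℝ)..T, ∫ x : ℝ, ‖hA' t x‖ ^ 2) =
      (1 / 9) * (12 + Real.pi ^ 2) * ∫ t in (0 : ℝ)..T, (deriv A t) ^ 2 / A t := by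
  have hnorm (t x : ℝ) : ‖hA' t x‖ ^ 2 = 2 * deriv A t ^ 2 * solitonScalingMode (A t * x) ^ 2 := by
    rw [hcontrol, hu, control_eq_scalingMode (hApos t).ne', norm_I_mul_exp_mul_ofReal_sq, mul_pow,
      mul_pow, sq_sqrt zero_le_two]
  have hslice (t : ℝ) : ∫ x, ‖hA' t x‖ ^ 2 = 1 / 9 * (12 + π ^ 2) * (deriv A t ^ 2 / A t) := by
    have := (hApos t).ne'
    simp_rw [hnorm, integral_const_mul, integral_solitonScalingMode_sq_comp_mul (hApos t)]
    field_simp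
    ring
  simp_rw [hslice]
  exact intervalIntegral.integral_const_mul _ _

/-- For the modulated soliton `u(t,x) = √2 A(t) exp(−i∫₀ᵗA²) sech(A(t)x)`, the control
`h_A(t,x) = i (A'/A)(t) u(t,x) − i√2 A'(t) exp(−i∫₀ᵗA²) A(t) x sinh(A(t)x)/cosh²(A(t)x)`
has squared space-time `L²` norm `(1/9)(12+π²) ∫₀ᵀ A'(t)²/A(t) dt`. -/
theorem modulated_soliton_control_cost
    (T : ℝ) (hT : 0 < T)
    (A : ℝ → ℝ) (hA : ContDiff ℝ 1 A) (hApos : ∀ t, 0 < A t)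
    (u hA' : ℝ → ℝ → ℂ)
    (hu : ∀ t x : ℝ, u t x =
      ((Real.sqrt 2 * A t / Real.cosh (A t * x) : ℝ) : ℂ) *
        Complex.exp (-Complex.I * ((∫ s in (0 : ℝ)..t, (A s) ^ 2 : ℝ) : ℂ)))
    (hcontrol : ∀ t x : ℝ, hA' t x =
      Complex.I * ((deriv A t / A t : ℝ) : ℂ) * u t x -
        Complex.I * ((Real.sqrt 2 * deriv A t : ℝ) : ℂ) *
          Complex.exp (-Complex.I * ((∫ s in (0 : ℝ)..t, (A s) ^ 2 : ℝ) : ℂ)) *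
          ((A t * x * Real.sinh (A t * x) / (Real.cosh (A t * x)) ^ 2 : ℝ) : ℂ)) :
    (∫ t in (0 : ℝ)..T, ∫ x : ℝ, ‖hA' t x‖ ^ 2) =
      (1 / 9) * (12 + Real.pi ^ 2) * ∫ t in (0 : ℝ)..T, (deriv A t) ^ 2 / A t :=
  modulated_soliton_control_cost_general T A hApos u hA' hu hcontrol
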